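/- arXiv:1412.0211 — 7 statements merged into one kernel-verified Lean document; each statement's English description precedes it below -/
import Mathlib

section
/- Let F : C → D be a (strong) monoidal functor between rigid monoidal categories. Then F has a left adjoint if and only if F has a right adjoint. Moreover, if L ⊣ F ⊣ R, then R is naturally isomorphic to the functor X ↦ ʸ(L(X^*)) and also to X ↦ (L(ʸX))^*, and L is naturally isomorphic to X ↦ ʸ(R(X^*)) and to X ↦ (R(ʸX))^*. -/
open CategoryTheory MonoidalCategory

universe v₁ v₂ u₁ u₂

variable {C : Type u₁} [Category.{v₁} C] [MonoidalCategory C] [RigidCategory C]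
variable {D : Type u₂} [Category.{v₂} D] [MonoidalCategory D] [RigidCategory D]

/-- For a functor `T` between rigid categories, `T^!(X) = ʸ(T(X^*))`:
the right dual of `T` applied to the left dual of `X`.
(The paper's left dual `X^*` is Mathlib's `Xᘁ` and the paper's right dual `ʸX` is `ᘁX`.) -/
noncomputable def shriek (T : C ⥤ D) : C ⥤ D where
  obj X := ᘁ(T.obj (Xᘁ))
  map f := ᘁ(T.map (fᘁ))
  map_id X := by simp
  map_comp f g := by simp [comp_rightAdjointMate, comp_leftAdjointMate]

/-- For a functor `T` between rigid categories, `ʸT(X) = (T(ʸX))^*`. -/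
noncomputable def shriek' (T : C ⥤ D) : C ⥤ D where
  obj X := (T.obj (ᘁX))ᘁ
  map f := (T.map (ᘁf))ᘁ
  map_id X := by simp
  map_comp f g := by simp [comp_rightAdjointMate, comp_leftAdjointMate]

namespace StmtAux

open Functor.LaxMonoidal Functor.OplaxMonoidal

section OneCat
variable {E : Type u₁} [Category.{v₁} E] [MonoidalCategory E] [RigidCategory E]

lemma DM1 {X Y : E} (f : X ⟶ Y) : (ᘁf)ᘁ = f := by
  dsimp only [rightAdjointMate]
  show (ρ_ X).inv ≫ X ◁ η_ (ᘁY) Y ≫ X ◁ (ᘁf) ▷ Y ≫ (α_ X (ᘁX) Y).inv ≫ ε_ (ᘁX) X ▷ Y ≫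
      (λ_ Y).hom = f
  calc _ = (ρ_ X).inv ≫ (X ◁ (η_ (ᘁY) Y ≫ (ᘁf) ▷ Y)) ≫ (α_ _ _ _).inv ≫ ε_ (ᘁX) X ▷ Y ≫
      (λ_ Y).hom := by
        simp only [MonoidalCategory.whiskerLeft_comp, Category.assoc]
    _ = (ρ_ X).inv ≫ (X ◁ (η_ (ᘁX) X ≫ (ᘁX) ◁ f)) ≫ (α_ _ _ _).inv ≫ ε_ (ᘁX) X ▷ Y ≫
      (λ_ Y).hom := by
        rw [coevaluation_comp_leftAdjointMate]
    _ = f := by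
        simp only [MonoidalCategory.whiskerLeft_comp, Category.assoc]
        rw [associator_inv_naturality_right_assoc, whisker_exchange_assoc]
        simp

lemma DM2 {X Y : E} (f : X ⟶ Y) : (ᘁ(fᘁ)) = f := by
  dsimp only [leftAdjointMate]
  show (λ_ X).inv ≫ η_ Y (Yᘁ) ▷ X ≫ (Y ◁ (fᘁ)) ▷ X ≫ (α_ Y (Xᘁ) X).hom ≫ Y ◁ ε_ X (Xᘁ) ≫
      (ρ_ Y).hom = f
  calc _ = (λ_ X).inv ≫ ((η_ Y (Yᘁ) ≫ Y ◁ (fᘁ)) ▷ X) ≫ (α_ _ _ _).hom ≫ Y ◁ ε_ X (Xᘁ) ≫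
      (ρ_ Y).hom := by
        simp only [comp_whiskerRight, Category.assoc]
    _ = (λ_ X).inv ≫ ((η_ X (Xᘁ) ≫ f ▷ (Xᘁ)) ▷ X) ≫ (α_ _ _ _).hom ≫ Y ◁ ε_ X (Xᘁ) ≫
      (ρ_ Y).hom := by
        rw [coevaluation_comp_rightAdjointMate]
    _ = f := by
        simp only [comp_whiskerRight, Category.assoc]
        rw [associator_naturality_left_assoc, ← whisker_exchange_assoc]
        simp

abbrev lD (X : E) : E := ᘁX
abbrev rD (X : E) : E := Xᘁ
noncomputable abbrev lm {X Y : E} (f : X ⟶ Y) : lD Y ⟶ lD X := ᘁf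
noncomputable abbrev rm {X Y : E} (f : X ⟶ Y) : rD Y ⟶ rD X := fᘁ

noncomputable def uIso (X : E) : X ≅ lD (rD X) :=
  leftDualIso (inferInstance : ExactPairing X (rD X))
    (inferInstance : ExactPairing (lD (rD X)) (rD X))

noncomputable def kIso (X : E) : X ≅ rD (lD X) :=
  rightDualIso (inferInstance : ExactPairing (lD X) X)
    (inferInstance : ExactPairing (lD X) (rD (lD X)))

lemma uIso_natural {X Y : E} (f : X ⟶ Y) :
    f ≫ (uIso Y).hom = (uIso X).hom ≫ lm (rm f) := by
  have hA := @comp_leftAdjointMate E _ _ (rD Y) (rD X) (rD X)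
    (LeftRigidCategory.leftDual _) (LeftRigidCategory.leftDual _) ⟨X⟩ (rm f) (𝟙 (rD X))
  have hB := @comp_leftAdjointMate E _ _ (rD Y) (rD Y) (rD X)
    (LeftRigidCategory.leftDual _) ⟨Y⟩ ⟨X⟩ (𝟙 (rD Y)) (rm f)
  rw [Category.comp_id] at hA
  rw [Category.id_comp] at hB
  show f ≫ @leftAdjointMate E _ _ (rD Y) (rD Y) (LeftRigidCategory.leftDual _) ⟨Y⟩ (𝟙 (rD Y)) =
    @leftAdjointMate E _ _ (rD X) (rD X) (LeftRigidCategory.leftDual _) ⟨X⟩ (𝟙 (rD X)) ≫ lm (rm f)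
  rw [← hA, hB]
  congr 1
  exact (DM2 f).symm

lemma kIso_natural {X Y : E} (f : X ⟶ Y) :
    f ≫ (kIso Y).hom = (kIso X).hom ≫ rm (lm f) := by
  have hA := @comp_rightAdjointMate E _ _ (lD Y) (lD X) (lD X)
    (RightRigidCategory.rightDual _) (RightRigidCategory.rightDual _) ⟨X⟩ (lm f) (𝟙 (lD X))
  have hB := @comp_rightAdjointMate E _ _ (lD Y) (lD Y) (lD X)
    (RightRigidCategory.rightDual _) ⟨Y⟩ ⟨X⟩ (𝟙 (lD Y)) (lm f)
  rw [Category.comp_id] at hA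
  rw [Category.id_comp] at hB
  show f ≫ @rightAdjointMate E _ _ (lD Y) (lD Y) (RightRigidCategory.rightDual _) ⟨Y⟩ (𝟙 (lD Y)) =
    @rightAdjointMate E _ _ (lD X) (lD X) (RightRigidCategory.rightDual _) ⟨X⟩ (𝟙 (lD X)) ≫
      rm (lm f)
  rw [← hA, hB]
  congr 1
  exact (DM1 f).symm

variable (E) in
noncomputable def dFL : E ⥤ Eᵒᵖ where
  obj X := Opposite.op (rD X)
  map f := (rm f).op
  map_id X := by simp
  map_comp f g := by simp [comp_rightAdjointMate]

variable (E) in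
noncomputable def dFR : Eᵒᵖ ⥤ E where
  obj X := lD (X.unop)
  map f := lm (f.unop)
  map_id X := by simp
  map_comp f g := by simp [comp_leftAdjointMate]

variable (E) in
noncomputable def dGL : E ⥤ Eᵒᵖ where
  obj X := Opposite.op (lD X)
  map f := (lm f).op
  map_id X := by simp
  map_comp f g := by simp [comp_leftAdjointMate]

variable (E) in
noncomputable def dGR : Eᵒᵖ ⥤ E where
  obj X := rD (X.unop)
  map f := rm (f.unop)
  map_id X := by simp
  map_comp f g := by simp [comp_rightAdjointMate]

variable (E) in
noncomputable def dualEquivF : E ≌ Eᵒᵖ :=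
  CategoryTheory.Equivalence.mk (dFL E) (dFR E)
    (NatIso.ofComponents (fun X => uIso X) (by
      intro X Y f
      exact uIso_natural f))
    (NatIso.ofComponents (fun X => (kIso X.unop).op) (by
      intro X Y f
      apply Quiver.Hom.unop_inj
      exact (kIso_natural f.unop).symm))

variable (E) in
noncomputable def dualEquivG : E ≌ Eᵒᵖ :=
  CategoryTheory.Equivalence.mk (dGL E) (dGR E)
    (NatIso.ofComponents (fun X => kIso X) (by
      intro X Y f
      exact kIso_natural f))
    (NatIso.ofComponents (fun X => (uIso X.unop).op) (by
      intro X Y f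
      apply Quiver.Hom.unop_inj
      exact (uIso_natural f.unop).symm))

end OneCat

section Swap
variable {A : C ⥤ D} {B : D ⥤ C}

noncomputable def shriekIsoF (T : C ⥤ D) : (dFL C ⋙ T.op ⋙ dFR D) ≅ shriek T :=
  NatIso.ofComponents (fun X => Iso.refl _) (by
    intro X Y f
    simp only [Iso.refl_hom, Category.comp_id, Category.id_comp]
    exact (Category.comp_id _).trans (Category.id_comp _).symm)

noncomputable def shriekIsoG (T : C ⥤ D) : (dGL C ⋙ T.op ⋙ dGR D) ≅ shriek' T :=
  NatIso.ofComponents (fun X => Iso.refl _) (by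
    intro X Y f
    simp only [Iso.refl_hom, Category.comp_id, Category.id_comp]
    exact (Category.comp_id _).trans (Category.id_comp _).symm)

/-- From `A ⊣ B` get `shriek B ⊣ shriek A`. -/
noncomputable def adjSwap (adj : A ⊣ B) : shriek B ⊣ shriek A :=
  let step1 : B.op ⋙ dFR C ⊣ dFL C ⋙ A.op :=
    (Adjunction.op adj).comp (dualEquivF C).symm.toAdjunction
  let step2 : dFL D ⋙ B.op ⋙ dFR C ⊣ (dFL C ⋙ A.op) ⋙ dFR D :=
    (dualEquivF D).toAdjunction.comp step1
  ((step2.ofNatIsoLeft (shriekIsoF (C := D) (D := C) B)).ofNatIsoRight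
    ((Functor.associator _ _ _) ≪≫ shriekIsoF A))

noncomputable def adjSwap' (adj : A ⊣ B) : shriek' B ⊣ shriek' A :=
  let step1 : B.op ⋙ dGR C ⊣ dGL C ⋙ A.op :=
    (Adjunction.op adj).comp (dualEquivG C).symm.toAdjunction
  let step2 : dGL D ⋙ B.op ⋙ dGR C ⊣ (dGL C ⋙ A.op) ⋙ dGR D :=
    (dualEquivG D).toAdjunction.comp step1
  ((step2.ofNatIsoLeft (shriekIsoG (C := D) (D := C) B)).ofNatIsoRight
    ((Functor.associator _ _ _) ≪≫ shriekIsoG A))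

end Swap

section Monoidal
variable (F : C ⥤ D) [F.Monoidal]

/-- A monoidal functor sends an exact pairing to an exact pairing. -/
noncomputable def Fpair (A B : C) [ExactPairing A B] : ExactPairing (F.obj A) (F.obj B) where
  coevaluation' := ε F ≫ F.map (η_ A B) ≫ δ F A B
  evaluation' := μ F B A ≫ F.map (ε_ A B) ≫ η F
  coevaluation_evaluation' := by
    have h := congrArg F.map (ExactPairing.coevaluation_evaluation A B)
    rw [F.map_comp, F.map_comp, Functor.Monoidal.map_whiskerLeft,
      Functor.Monoidal.map_associator_inv, Functor.Monoidal.map_whiskerRight] at h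
    rw [F.map_comp, Functor.Monoidal.map_rightUnitor, Functor.Monoidal.map_leftUnitor_inv] at h
    simp only [Category.assoc, Functor.Monoidal.μ_δ_assoc, Iso.cancel_iso_hom_left] at h
    rw [cancel_epi (δ F B (𝟙_ C))] at h
    have hP : F.obj B ◁ F.map (η_ A B) ≫ F.obj B ◁ δ F A B ≫
        (α_ (F.obj B) (F.obj A) (F.obj B)).inv ≫ μ F B A ▷ F.obj B ≫
        F.map (ε_ A B) ▷ F.obj B =
        F.obj B ◁ η F ≫ (ρ_ (F.obj B)).hom ≫ (λ_ (F.obj B)).inv ≫ ε F ▷ F.obj B := by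
      rw [← cancel_mono (μ F (𝟙_ C) B)]
      simpa [Category.assoc] using h
    simp only [MonoidalCategory.whiskerLeft_comp, comp_whiskerRight, Category.assoc]
    rw [reassoc_of% hP]
    simp
  evaluation_coevaluation' := by
    have h := congrArg F.map (ExactPairing.evaluation_coevaluation A B)
    rw [F.map_comp, F.map_comp, Functor.Monoidal.map_whiskerLeft,
      Functor.Monoidal.map_associator, Functor.Monoidal.map_whiskerRight] at h
    rw [F.map_comp, Functor.Monoidal.map_leftUnitor, Functor.Monoidal.map_rightUnitor_inv] at h
    simp only [Category.assoc, Functor.Monoidal.μ_δ_assoc, Iso.cancel_iso_hom_left] at h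
    rw [cancel_epi (δ F (𝟙_ C) A)] at h
    have hP : F.map (η_ A B) ▷ F.obj A ≫ δ F A B ▷ F.obj A ≫
        (α_ (F.obj A) (F.obj B) (F.obj A)).hom ≫ F.obj A ◁ μ F B A ≫
        F.obj A ◁ F.map (ε_ A B) =
        η F ▷ F.obj A ≫ (λ_ (F.obj A)).hom ≫ (ρ_ (F.obj A)).inv ≫ F.obj A ◁ ε F := by
      rw [← cancel_mono (μ F A (𝟙_ C))]
      simpa [Category.assoc] using h
    simp only [MonoidalCategory.whiskerLeft_comp, comp_whiskerRight, Category.assoc]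
    rw [reassoc_of% hP]
    simp

lemma map_mate {X Y : C} (f : X ⟶ Y) :
    F.map (fᘁ) = @rightAdjointMate D _ _ (F.obj X) (F.obj Y)
      (HasRightDual.mk _ (exact := Fpair F X (Xᘁ)))
      (HasRightDual.mk _ (exact := Fpair F Y (Yᘁ))) (F.map f) := by
  dsimp only [rightAdjointMate]
  show _ = (ρ_ (F.obj (Yᘁ))).inv ≫ F.obj (Yᘁ) ◁ (ε F ≫ F.map (η_ X (Xᘁ)) ≫ δ F X (Xᘁ)) ≫
      F.obj (Yᘁ) ◁ (F.map f ▷ F.obj (Xᘁ)) ≫ (α_ _ _ _).inv ≫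
      (μ F (Yᘁ) Y ≫ F.map (ε_ Y (Yᘁ)) ≫ η F) ▷ F.obj (Xᘁ) ≫ (λ_ (F.obj (Xᘁ))).hom
  rw [F.map_comp, F.map_comp, F.map_comp, F.map_comp, F.map_comp]
  rw [Functor.Monoidal.map_rightUnitor_inv, Functor.Monoidal.map_whiskerLeft,
    Functor.Monoidal.map_whiskerLeft, Functor.Monoidal.map_whiskerRight,
    Functor.Monoidal.map_associator_inv, Functor.Monoidal.map_whiskerRight,
    Functor.Monoidal.map_leftUnitor]
  simp only [Category.assoc, Functor.Monoidal.μ_δ_assoc, Functor.Monoidal.δ_μ_assoc,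
    MonoidalCategory.whiskerLeft_comp, comp_whiskerRight,
    Functor.Monoidal.whiskerLeft_μ_δ_assoc, Functor.Monoidal.whiskerLeft_δ_μ_assoc,
    Functor.Monoidal.whiskerRight_μ_δ_assoc, Functor.Monoidal.whiskerRight_δ_μ_assoc]

lemma map_mate' {X Y : C} (f : X ⟶ Y) :
    F.map (ᘁf) = @leftAdjointMate D _ _ (F.obj X) (F.obj Y)
      (HasLeftDual.mk _ (exact := Fpair F (ᘁX) X))
      (HasLeftDual.mk _ (exact := Fpair F (ᘁY) Y)) (F.map f) := by
  dsimp only [leftAdjointMate]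
  show _ = (λ_ (F.obj (lD Y))).inv ≫
      (ε F ≫ F.map (η_ (lD X) X) ≫ δ F (lD X) X) ▷ F.obj (lD Y) ≫
      (F.obj (lD X) ◁ F.map f) ▷ F.obj (lD Y) ≫ (α_ _ _ _).hom ≫
      F.obj (lD X) ◁ (μ F Y (lD Y) ≫ F.map (ε_ (lD Y) Y) ≫ η F) ≫
      (ρ_ (F.obj (lD X))).hom
  rw [F.map_comp, F.map_comp, F.map_comp, F.map_comp, F.map_comp]
  rw [Functor.Monoidal.map_leftUnitor_inv, Functor.Monoidal.map_whiskerRight,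
    Functor.Monoidal.map_whiskerRight, Functor.Monoidal.map_whiskerLeft,
    Functor.Monoidal.map_associator, Functor.Monoidal.map_whiskerLeft,
    Functor.Monoidal.map_rightUnitor]
  simp only [Category.assoc, Functor.Monoidal.μ_δ_assoc, Functor.Monoidal.δ_μ_assoc,
    MonoidalCategory.whiskerLeft_comp, comp_whiskerRight,
    Functor.Monoidal.whiskerLeft_μ_δ_assoc, Functor.Monoidal.whiskerLeft_δ_μ_assoc,
    Functor.Monoidal.whiskerRight_μ_δ_assoc, Functor.Monoidal.whiskerRight_δ_μ_assoc]

noncomputable def psiIso (X : C) : F.obj (Xᘁ) ≅ (rD (F.obj X)) :=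
  rightDualIso (Fpair F X (Xᘁ)) (inferInstance : ExactPairing (F.obj X) (rD (F.obj X)))

noncomputable def psi'Iso (X : C) : F.obj (ᘁX) ≅ (lD (F.obj X)) :=
  leftDualIso (Fpair F (ᘁX) X) (inferInstance : ExactPairing (lD (F.obj X)) (F.obj X))

lemma psiIso_natural {X Y : C} (f : X ⟶ Y) :
    F.map (fᘁ) ≫ (psiIso F X).hom = (psiIso F Y).hom ≫ rm (F.map f) := by
  have hA := @comp_rightAdjointMate D _ _ (F.obj X) (F.obj X) (F.obj Y)
    inferInstance (HasRightDual.mk _ (exact := Fpair F X (Xᘁ)))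
    (HasRightDual.mk _ (exact := Fpair F Y (Yᘁ)))
    (𝟙 (F.obj X)) (F.map f)
  have hB := @comp_rightAdjointMate D _ _ (F.obj X) (F.obj Y) (F.obj Y)
    inferInstance inferInstance (HasRightDual.mk _ (exact := Fpair F Y (Yᘁ)))
    (F.map f) (𝟙 (F.obj Y))
  rw [Category.id_comp] at hA
  rw [Category.comp_id] at hB
  show F.map (fᘁ) ≫ @rightAdjointMate D _ _ (F.obj X) (F.obj X) inferInstance
      (HasRightDual.mk _ (exact := Fpair F X (Xᘁ))) (𝟙 (F.obj X)) =
    @rightAdjointMate D _ _ (F.obj Y) (F.obj Y) inferInstance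
      (HasRightDual.mk _ (exact := Fpair F Y (Yᘁ))) (𝟙 (F.obj Y)) ≫ rm (F.map f)
  rw [← hB, hA, map_mate]

lemma psi'Iso_natural {X Y : C} (f : X ⟶ Y) :
    F.map (ᘁf) ≫ (psi'Iso F X).hom = (psi'Iso F Y).hom ≫ lm (F.map f) := by
  have hA := @comp_leftAdjointMate D _ _ (F.obj X) (F.obj X) (F.obj Y)
    inferInstance (HasLeftDual.mk _ (exact := Fpair F (ᘁX) X))
    (HasLeftDual.mk _ (exact := Fpair F (ᘁY) Y))
    (𝟙 (F.obj X)) (F.map f)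
  have hB := @comp_leftAdjointMate D _ _ (F.obj X) (F.obj Y) (F.obj Y)
    inferInstance inferInstance (HasLeftDual.mk _ (exact := Fpair F (ᘁY) Y))
    (F.map f) (𝟙 (F.obj Y))
  rw [Category.id_comp] at hA
  rw [Category.comp_id] at hB
  show F.map (ᘁf) ≫ @leftAdjointMate D _ _ (F.obj X) (F.obj X) inferInstance
      (HasLeftDual.mk _ (exact := Fpair F (ᘁX) X)) (𝟙 (F.obj X)) =
    @leftAdjointMate D _ _ (F.obj Y) (F.obj Y) inferInstance
      (HasLeftDual.mk _ (exact := Fpair F (ᘁY) Y)) (𝟙 (F.obj Y)) ≫ lm (F.map f)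
  rw [← hB, hA, map_mate']

/-- The natural isomorphism `F ≅ shriek F` for a monoidal functor. -/
noncomputable def thetaIso : F ≅ shriek F :=
  NatIso.ofComponents
    (fun X => uIso (F.obj X) ≪≫ (dFR D).mapIso (psiIso F X).op)
    (by
      intro X Y f
      show F.map f ≫ (uIso (F.obj Y)).hom ≫ (dFR D).map ((psiIso F Y).hom.op) =
        ((uIso (F.obj X)).hom ≫ (dFR D).map ((psiIso F X).hom.op)) ≫
          (dFR D).map ((F.map (rm f)).op)
      refine (Category.assoc _ _ _).symm.trans ?_
      erw [uIso_natural (F.map f)]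
      refine (Category.assoc _ _ _).trans (Eq.trans ?_ (Category.assoc _ _ _).symm)
      congr 1
      show (dFR D).map ((rm (F.map f)).op) ≫ (dFR D).map ((psiIso F Y).hom.op) =
        (dFR D).map ((psiIso F X).hom.op) ≫ (dFR D).map ((F.map (rm f)).op)
      rw [← Functor.map_comp, ← Functor.map_comp, ← op_comp, ← op_comp, psiIso_natural])

/-- The natural isomorphism `F ≅ shriek' F` for a monoidal functor. -/
noncomputable def theta'Iso : F ≅ shriek' F :=
  NatIso.ofComponents
    (fun X => kIso (F.obj X) ≪≫ (dGR D).mapIso (psi'Iso F X).op)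
    (by
      intro X Y f
      show F.map f ≫ (kIso (F.obj Y)).hom ≫ (dGR D).map ((psi'Iso F Y).hom.op) =
        ((kIso (F.obj X)).hom ≫ (dGR D).map ((psi'Iso F X).hom.op)) ≫
          (dGR D).map ((F.map (lm f)).op)
      refine (Category.assoc _ _ _).symm.trans ?_
      erw [kIso_natural (F.map f)]
      refine (Category.assoc _ _ _).trans (Eq.trans ?_ (Category.assoc _ _ _).symm)
      congr 1
      show (dGR D).map ((lm (F.map f)).op) ≫ (dGR D).map ((psi'Iso F Y).hom.op) =
        (dGR D).map ((psi'Iso F X).hom.op) ≫ (dGR D).map ((F.map (lm f)).op)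
      rw [← Functor.map_comp, ← Functor.map_comp, ← op_comp, ← op_comp, psi'Iso_natural])

end Monoidal
end StmtAux

/-- A strong monoidal functor between rigid monoidal categories has a left adjoint iff it
has a right adjoint; moreover if `L ⊣ F ⊣ R` then `R ≅ ʸ(L((-)^*)) ≅ (L(ʸ-))^*` and
`L ≅ ʸ(R((-)^*)) ≅ (R(ʸ-))^*`. -/
theorem stmt_1 (F : C ⥤ D) [F.Monoidal] :
    ((∃ L : D ⥤ C, Nonempty (L ⊣ F)) ↔ (∃ R : D ⥤ C, Nonempty (F ⊣ R))) ∧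
    (∀ (L R : D ⥤ C), (L ⊣ F) → (F ⊣ R) →
      Nonempty (R ≅ shriek L) ∧ Nonempty (R ≅ shriek' L) ∧
      Nonempty (L ≅ shriek R) ∧ Nonempty (L ≅ shriek' R)) := by
  constructor
  · constructor
    · rintro ⟨L, ⟨adj⟩⟩
      exact ⟨shriek L, ⟨(StmtAux.adjSwap adj).ofNatIsoLeft (StmtAux.thetaIso F).symm⟩⟩
    · rintro ⟨R, ⟨adj⟩⟩
      exact ⟨shriek R, ⟨(StmtAux.adjSwap adj).ofNatIsoRight (StmtAux.thetaIso F).symm⟩⟩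
  · intro L R adj1 adj2
    have hFshL : F ⊣ shriek L := (StmtAux.adjSwap adj1).ofNatIsoLeft (StmtAux.thetaIso F).symm
    have hFshL' : F ⊣ shriek' L :=
      (StmtAux.adjSwap' adj1).ofNatIsoLeft (StmtAux.theta'Iso F).symm
    have hshRF : shriek R ⊣ F := (StmtAux.adjSwap adj2).ofNatIsoRight (StmtAux.thetaIso F).symm
    have hshRF' : shriek' R ⊣ F :=
      (StmtAux.adjSwap' adj2).ofNatIsoRight (StmtAux.theta'Iso F).symm
    exact ⟨⟨adj2.rightAdjointUniq hFshL⟩, ⟨adj2.rightAdjointUniq hFshL'⟩,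
      ⟨adj1.leftAdjointUniq hshRF⟩, ⟨adj1.leftAdjointUniq hshRF'⟩⟩
end

section
/- Let F : C → D be a strong monoidal functor between rigid monoidal categories with a left adjoint L and a right adjoint R. If R has a right adjoint G, then L has a left adjoint. Conversely, if L has a left adjoint, then R has a right adjoint. -/
open CategoryTheory MonoidalCategory

universe v₁ v₂ u₁ u₂

variable {C : Type u₁} [Category.{v₁} C] [MonoidalCategory C] [RigidCategory C]
variable {D : Type u₂} [Category.{v₂} D] [MonoidalCategory D] [RigidCategory D]

section Aux
open Functor.LaxMonoidal Functor.OplaxMonoidal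
open Functor.Monoidal in
/-- Push an exact pairing forward along a strong monoidal functor. -/
def mapPairing (F : C ⥤ D) [F.Monoidal] (X Y : C) [ExactPairing X Y] :
    ExactPairing (F.obj X) (F.obj Y) where
  evaluation' := μ F Y X ≫ F.map (ε_ X Y) ≫ η F
  coevaluation' := ε F ≫ F.map (η_ X Y) ≫ δ F X Y
  coevaluation_evaluation' := by
    calc F.obj Y ◁ (ε F ≫ F.map (η_ X Y) ≫ δ F X Y) ≫ (α_ _ _ _).inv ≫
          (μ F Y X ≫ F.map (ε_ X Y) ≫ η F) ▷ F.obj Y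
        = (F.obj Y ◁ ε F ≫ μ F Y (𝟙_ C)) ≫
            F.map (Y ◁ η_ X Y ≫ (α_ Y X Y).inv ≫ ε_ X Y ▷ Y) ≫
            (δ F (𝟙_ C) Y ≫ η F ▷ F.obj Y) := by
          symm
          simp only [Functor.map_comp, Category.assoc]
          rw [← μ_natural_right_assoc, map_associator_inv]
          simp only [Category.assoc]
          rw [Functor.Monoidal.μ_δ_assoc, ← μ_natural_left_assoc, Functor.Monoidal.μ_δ_assoc]
          simp only [MonoidalCategory.whiskerLeft_comp, comp_whiskerRight, Category.assoc]
      _ = _ := by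
          rw [ExactPairing.coevaluation_evaluation, F.map_comp, map_rightUnitor,
            map_leftUnitor_inv]
          simp
  evaluation_coevaluation' := by
    calc (ε F ≫ F.map (η_ X Y) ≫ δ F X Y) ▷ F.obj X ≫ (α_ _ _ _).hom ≫
          F.obj X ◁ (μ F Y X ≫ F.map (ε_ X Y) ≫ η F)
        = (ε F ▷ F.obj X ≫ μ F (𝟙_ C) X) ≫
            F.map (η_ X Y ▷ X ≫ (α_ X Y X).hom ≫ X ◁ ε_ X Y) ≫
            (δ F X (𝟙_ C) ≫ F.obj X ◁ η F) := by
          symm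
          simp only [Functor.map_comp, Category.assoc]
          rw [← μ_natural_left_assoc, map_associator]
          simp only [Category.assoc]
          rw [Functor.Monoidal.μ_δ_assoc, ← μ_natural_right_assoc, Functor.Monoidal.μ_δ_assoc]
          simp only [MonoidalCategory.whiskerLeft_comp, comp_whiskerRight, Category.assoc]
      _ = _ := by
          rw [ExactPairing.evaluation_coevaluation, F.map_comp, map_leftUnitor,
            map_rightUnitor_inv]
          simp

theorem mate_mate {X Y : C} [HasRightDual X] [HasRightDual Y] (f : X ⟶ Y) : (ᘁ(fᘁ)) = f := by
  have h : η_ X (Xᘁ) ≫ (ᘁ(fᘁ)) ▷ (Xᘁ) = η_ X (Xᘁ) ≫ f ▷ (Xᘁ) :=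
    (coevaluation_comp_leftAdjointMate (fᘁ)).trans (coevaluation_comp_rightAdjointMate f)
  apply_fun (tensorRightHomEquiv (𝟙_ C) X (Xᘁ) Y).symm at h
  simpa [tensorRightHomEquiv_symm_coevaluation_comp_whiskerRight] using h

theorem mate_mate' {X Y : C} [HasLeftDual X] [HasLeftDual Y] (f : X ⟶ Y) : ((ᘁf)ᘁ) = f := by
  have h : η_ (ᘁX) X ≫ (ᘁX : C) ◁ ((ᘁf)ᘁ) = η_ (ᘁX) X ≫ (ᘁX : C) ◁ f :=
    (coevaluation_comp_rightAdjointMate (ᘁf)).trans (coevaluation_comp_leftAdjointMate f)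
  apply_fun (tensorLeftHomEquiv (𝟙_ C) (ᘁX) X Y).symm at h
  simpa [tensorLeftHomEquiv_symm_coevaluation_comp_whiskerLeft] using h

/-- The left dual of `F.obj X` coming from the image of a left dual of `X`. -/
def fLeftDual (F : C ⥤ D) [F.Monoidal] (X : C) [HasLeftDual X] : HasLeftDual (F.obj X) :=
  letI := mapPairing F (ᘁX) X; ⟨F.obj (ᘁX)⟩

/-- The right dual of `F.obj X` coming from the image of a right dual of `X`. -/
def fRightDual (F : C ⥤ D) [F.Monoidal] (X : C) [HasRightDual X] : HasRightDual (F.obj X) :=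
  letI := mapPairing F X (Xᘁ); ⟨F.obj (Xᘁ)⟩

theorem map_leftMate (F : C ⥤ D) [F.Monoidal] {X Y : C} [HasLeftDual X] [HasLeftDual Y]
    (f : X ⟶ Y) :
    @leftAdjointMate D _ _ (F.obj X) (F.obj Y) (fLeftDual F X) (fLeftDual F Y) (F.map f)
      = F.map (ᘁf) := by
  letI iX := fLeftDual F X
  letI iY := fLeftDual F Y
  have h1 : η_ (ᘁ(F.obj Y)) (F.obj Y) ≫ (ᘁ(F.map f)) ▷ F.obj Y
      = η_ (ᘁ(F.obj X)) (F.obj X) ≫ (ᘁ(F.obj X) : D) ◁ F.map f :=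
    coevaluation_comp_leftAdjointMate (F.map f)
  have h2 : η_ (ᘁ(F.obj Y)) (F.obj Y) ≫ F.map (ᘁf) ▷ F.obj Y
      = η_ (ᘁ(F.obj X)) (F.obj X) ≫ (ᘁ(F.obj X) : D) ◁ F.map f := by
    show (Functor.LaxMonoidal.ε F ≫ F.map (η_ (ᘁY) Y) ≫ Functor.OplaxMonoidal.δ F (ᘁY) Y) ≫
          F.map (ᘁf) ▷ F.obj Y
        = (Functor.LaxMonoidal.ε F ≫ F.map (η_ (ᘁX) X) ≫ Functor.OplaxMonoidal.δ F (ᘁX) X) ≫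
          F.obj (ᘁX) ◁ F.map f
    simp only [Category.assoc, Functor.OplaxMonoidal.δ_natural_left,
      Functor.OplaxMonoidal.δ_natural_right, ← Functor.map_comp_assoc,
      coevaluation_comp_leftAdjointMate]
  have h3 := h1.trans h2.symm
  replace h3 := congrArg (tensorRightHomEquiv (𝟙_ D) (ᘁ(F.obj Y)) (F.obj Y) (F.obj (ᘁX))).symm h3
  erw [tensorRightHomEquiv_symm_coevaluation_comp_whiskerRight,
    tensorRightHomEquiv_symm_coevaluation_comp_whiskerRight] at h3
  exact (cancel_epi _).1 h3

theorem map_rightMate (F : C ⥤ D) [F.Monoidal] {X Y : C} [HasRightDual X] [HasRightDual Y]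
    (f : X ⟶ Y) :
    @rightAdjointMate D _ _ (F.obj X) (F.obj Y) (fRightDual F X) (fRightDual F Y) (F.map f)
      = F.map (fᘁ) := by
  letI iX := fRightDual F X
  letI iY := fRightDual F Y
  have h1 : η_ (F.obj Y) ((F.obj Y)ᘁ) ≫ F.obj Y ◁ ((F.map f)ᘁ)
      = η_ (F.obj X) ((F.obj X)ᘁ) ≫ F.map f ▷ ((F.obj X)ᘁ) :=
    coevaluation_comp_rightAdjointMate (F.map f)
  have h2 : η_ (F.obj Y) ((F.obj Y)ᘁ) ≫ F.obj Y ◁ F.map (fᘁ)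
      = η_ (F.obj X) ((F.obj X)ᘁ) ≫ F.map f ▷ ((F.obj X)ᘁ) := by
    show (Functor.LaxMonoidal.ε F ≫ F.map (η_ Y (Yᘁ)) ≫ Functor.OplaxMonoidal.δ F Y (Yᘁ)) ≫
          F.obj Y ◁ F.map (fᘁ)
        = (Functor.LaxMonoidal.ε F ≫ F.map (η_ X (Xᘁ)) ≫ Functor.OplaxMonoidal.δ F X (Xᘁ)) ≫
          F.map f ▷ F.obj (Xᘁ)
    simp only [Category.assoc, Functor.OplaxMonoidal.δ_natural_left,
      Functor.OplaxMonoidal.δ_natural_right, ← Functor.map_comp_assoc,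
      coevaluation_comp_rightAdjointMate]
  have h3 := h1.trans h2.symm
  replace h3 := congrArg (tensorLeftHomEquiv (𝟙_ D) (F.obj Y) ((F.obj Y)ᘁ) (F.obj (Xᘁ))).symm h3
  erw [tensorLeftHomEquiv_symm_coevaluation_comp_whiskerLeft,
    tensorLeftHomEquiv_symm_coevaluation_comp_whiskerLeft] at h3
  exact (cancel_epi _).1 h3

section Mixed
variable {A B : C}

theorem leftMate_natural (iA iA' : HasLeftDual A) (iB iB' : HasLeftDual B) (g : A ⟶ B) :
    @leftAdjointMate C _ _ A B iA iB g ≫ @leftAdjointMate C _ _ A A iA' iA (𝟙 A)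
      = @leftAdjointMate C _ _ B B iB' iB (𝟙 B) ≫ @leftAdjointMate C _ _ A B iA' iB' g := by
  have l := @comp_leftAdjointMate C _ _ A A B iA' iA iB (𝟙 A) g
  have r := @comp_leftAdjointMate C _ _ A B B iA' iB' iB g (𝟙 B)
  rw [Category.id_comp] at l
  rw [Category.comp_id] at r
  exact l.symm.trans r

theorem rightMate_natural (iA iA' : HasRightDual A) (iB iB' : HasRightDual B) (g : A ⟶ B) :
    @rightAdjointMate C _ _ A B iA iB g ≫ @rightAdjointMate C _ _ A A iA' iA (𝟙 A)
      = @rightAdjointMate C _ _ B B iB' iB (𝟙 B) ≫ @rightAdjointMate C _ _ A B iA' iB' g := by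
  have l := @comp_rightAdjointMate C _ _ A A B iA' iA iB (𝟙 A) g
  have r := @comp_rightAdjointMate C _ _ A B B iA' iB' iB g (𝟙 B)
  rw [Category.id_comp] at l
  rw [Category.comp_id] at r
  exact l.symm.trans r

/-- The iso between two choices of left dual, as a mixed-instance adjoint mate of the identity. -/
def leftMateIso (i i' : HasLeftDual A) :
    @HasLeftDual.leftDual C _ _ A i ≅ @HasLeftDual.leftDual C _ _ A i' where
  hom := @leftAdjointMate C _ _ A A i' i (𝟙 A)
  inv := @leftAdjointMate C _ _ A A i i' (𝟙 A)
  hom_inv_id := by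
    have l := @comp_leftAdjointMate C _ _ A A A i i' i (𝟙 A) (𝟙 A)
    rw [Category.comp_id] at l
    rw [← l, @leftAdjointMate_id C _ _ A i]
  inv_hom_id := by
    have l := @comp_leftAdjointMate C _ _ A A A i' i i' (𝟙 A) (𝟙 A)
    rw [Category.comp_id] at l
    rw [← l, @leftAdjointMate_id C _ _ A i']

/-- The iso between two choices of right dual, as a mixed-instance adjoint mate of the identity. -/
def rightMateIso (i i' : HasRightDual A) :
    @HasRightDual.rightDual C _ _ A i ≅ @HasRightDual.rightDual C _ _ A i' where
  hom := @rightAdjointMate C _ _ A A i' i (𝟙 A)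
  inv := @rightAdjointMate C _ _ A A i i' (𝟙 A)
  hom_inv_id := by
    have l := @comp_rightAdjointMate C _ _ A A A i i' i (𝟙 A) (𝟙 A)
    rw [Category.comp_id] at l
    rw [← l, @rightAdjointMate_id C _ _ A i]
  inv_hom_id := by
    have l := @comp_rightAdjointMate C _ _ A A A i' i i' (𝟙 A) (𝟙 A)
    rw [Category.comp_id] at l
    rw [← l, @rightAdjointMate_id C _ _ A i']

end Mixed

section Equivs
variable (C)

/-- The contravariant right-dual functor. -/
noncomputable def rdFunctor : C ⥤ Cᵒᵖ where
  obj X := Opposite.op (Xᘁ)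
  map f := (fᘁ).op
  map_id X := by rw [rightAdjointMate_id]; rfl
  map_comp f g := by rw [comp_rightAdjointMate]; rfl

/-- The contravariant left-dual functor out of the opposite category. -/
noncomputable def rdInverse : Cᵒᵖ ⥤ C where
  obj X := ᘁ(X.unop)
  map f := (ᘁ(f.unop))
  map_id X := by rw [unop_id, leftAdjointMate_id]
  map_comp f g := by rw [unop_comp, comp_leftAdjointMate]

/-- The contravariant left-dual functor. -/
noncomputable def ldFunctor : C ⥤ Cᵒᵖ where
  obj X := Opposite.op (ᘁX)
  map f := (ᘁf).op
  map_id X := by rw [leftAdjointMate_id]; rfl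
  map_comp f g := by rw [comp_leftAdjointMate]; rfl

/-- The contravariant right-dual functor out of the opposite category. -/
noncomputable def ldInverse : Cᵒᵖ ⥤ C where
  obj X := (X.unop)ᘁ
  map f := ((f.unop)ᘁ)
  map_id X := by rw [unop_id, rightAdjointMate_id]
  map_comp f g := by rw [unop_comp, comp_rightAdjointMate]

/-- The right-dual equivalence of a rigid category with its opposite. -/
noncomputable def rdEquiv : C ≌ Cᵒᵖ :=
  CategoryTheory.Equivalence.mk (rdFunctor C) (rdInverse C)
    (NatIso.ofComponents
      (fun X => leftMateIso (hasLeftDualRightDual (X := X)) (LeftRigidCategory.leftDual (Xᘁ)))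
      (fun {X Y} f => by
        have h := leftMate_natural (hasLeftDualRightDual (X := Y))
          (LeftRigidCategory.leftDual (Yᘁ) : HasLeftDual ((Yᘁ : C))) (hasLeftDualRightDual (X := X))
          (LeftRigidCategory.leftDual (Xᘁ) : HasLeftDual ((Xᘁ : C))) (fᘁ)
        rw [mate_mate] at h
        exact h))
    (NatIso.ofComponents
      (fun X => (rightMateIso (hasRightDualLeftDual (X := X.unop)) (RightRigidCategory.rightDual (ᘁ(X.unop)))).op)
      (fun {X Y} f => by
        have h := rightMate_natural (hasRightDualLeftDual (X := X.unop))
          (RightRigidCategory.rightDual (ᘁ(X.unop)) : HasRightDual (ᘁ(X.unop) : C)) (hasRightDualLeftDual (X := Y.unop))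
          (RightRigidCategory.rightDual (ᘁ(Y.unop)) : HasRightDual (ᘁ(Y.unop) : C)) (ᘁ(f.unop))
        rw [mate_mate'] at h
        exact congrArg Quiver.Hom.op h.symm))

/-- The left-dual equivalence of a rigid category with its opposite. -/
noncomputable def ldEquiv : C ≌ Cᵒᵖ :=
  CategoryTheory.Equivalence.mk (ldFunctor C) (ldInverse C)
    (NatIso.ofComponents
      (fun X => rightMateIso (hasRightDualLeftDual (X := X)) (RightRigidCategory.rightDual (ᘁX)))
      (fun {X Y} f => by
        have h := rightMate_natural (hasRightDualLeftDual (X := Y))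
          (RightRigidCategory.rightDual (ᘁY) : HasRightDual ((ᘁY : C))) (hasRightDualLeftDual (X := X))
          (RightRigidCategory.rightDual (ᘁX) : HasRightDual ((ᘁX : C))) (ᘁf)
        rw [mate_mate'] at h
        exact h))
    (NatIso.ofComponents
      (fun X => (leftMateIso (hasLeftDualRightDual (X := X.unop)) (LeftRigidCategory.leftDual ((X.unop)ᘁ))).op)
      (fun {X Y} f => by
        have h := leftMate_natural (hasLeftDualRightDual (X := X.unop))
          (LeftRigidCategory.leftDual ((X.unop)ᘁ) : HasLeftDual ((X.unop)ᘁ : C)) (hasLeftDualRightDual (X := Y.unop))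
          (LeftRigidCategory.leftDual ((Y.unop)ᘁ) : HasLeftDual ((Y.unop)ᘁ : C)) ((f.unop)ᘁ)
        rw [mate_mate] at h
        exact congrArg Quiver.Hom.op h.symm))

end Equivs

section Psi

/-- For strong monoidal `F`, the conjugate of `F.op` by the right-dual equivalences
is isomorphic to `F`. -/
noncomputable def psiR (F : C ⥤ D) [F.Monoidal] :
    ((rdEquiv C).functor ⋙ F.op ⋙ (rdEquiv D).inverse) ≅ F :=
  NatIso.ofComponents
    (fun X => leftMateIso (LeftRigidCategory.leftDual (F.obj (Xᘁ))) (fLeftDual F (Xᘁ)))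
    (fun {X Y} f => by
      have h := leftMate_natural
        (LeftRigidCategory.leftDual (F.obj (Yᘁ))) (fLeftDual F (Yᘁ))
        (LeftRigidCategory.leftDual (F.obj (Xᘁ))) (fLeftDual F (Xᘁ))
        (F.map (fᘁ))
      rw [map_leftMate, mate_mate] at h
      exact h)

/-- For strong monoidal `F`, the conjugate of `F.op` by the left-dual equivalences
is isomorphic to `F`. -/
noncomputable def psiL (F : C ⥤ D) [F.Monoidal] :
    ((ldEquiv C).functor ⋙ F.op ⋙ (ldEquiv D).inverse) ≅ F :=
  NatIso.ofComponents
    (fun X => rightMateIso (RightRigidCategory.rightDual (F.obj (ᘁX))) (fRightDual F (ᘁX)))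
    (fun {X Y} f => by
      have h := rightMate_natural
        (RightRigidCategory.rightDual (F.obj (ᘁY))) (fRightDual F (ᘁY))
        (RightRigidCategory.rightDual (F.obj (ᘁX))) (fRightDual F (ᘁX))
        (F.map (ᘁf))
      rw [map_rightMate, mate_mate'] at h
      exact h)

end Psi


end Aux

/-- For a strong monoidal functor `F` between rigid monoidal categories with
`L ⊣ F ⊣ R`: `R` has a right adjoint iff `L` has a left adjoint. -/
theorem stmt_2 (F : C ⥤ D) [F.Monoidal] (L R : D ⥤ C)
    (adjL : L ⊣ F) (adjR : F ⊣ R) :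
    (∃ G : C ⥤ D, Nonempty (R ⊣ G)) ↔ (∃ E : C ⥤ D, Nonempty (E ⊣ L)) := by
  constructor
  · rintro ⟨G, ⟨adjG⟩⟩
    refine ⟨(ldEquiv C).functor ⋙ G.op ⋙ (ldEquiv D).inverse, ⟨?_⟩⟩
    have b1 : ((ldEquiv C).functor ⋙ G.op ⋙ (ldEquiv D).inverse) ⊣
        ((ldEquiv D).functor ⋙ R.op ⋙ (ldEquiv C).inverse) :=
      ((ldEquiv C).toAdjunction.comp (adjG.op)).comp
        (ldEquiv D).symm.toAdjunction
    have b2 : ((ldEquiv D).functor ⋙ R.op ⋙ (ldEquiv C).inverse) ⊣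
        ((ldEquiv C).functor ⋙ F.op ⋙ (ldEquiv D).inverse) :=
      ((ldEquiv D).toAdjunction.comp (adjR.op)).comp
        (ldEquiv C).symm.toAdjunction
    have b3 : ((ldEquiv D).functor ⋙ R.op ⋙ (ldEquiv C).inverse) ⊣ F :=
      b2.ofNatIsoRight (psiL F)
    exact b1.ofNatIsoRight (Adjunction.leftAdjointUniq b3 adjL)
  · rintro ⟨E, ⟨adjE⟩⟩
    refine ⟨(rdEquiv C).functor ⋙ E.op ⋙ (rdEquiv D).inverse, ⟨?_⟩⟩
    have a1 : ((rdEquiv D).functor ⋙ L.op ⋙ (rdEquiv C).inverse) ⊣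
        ((rdEquiv C).functor ⋙ E.op ⋙ (rdEquiv D).inverse) :=
      ((rdEquiv D).toAdjunction.comp (adjE.op)).comp
        (rdEquiv C).symm.toAdjunction
    have a2 : ((rdEquiv C).functor ⋙ F.op ⋙ (rdEquiv D).inverse) ⊣
        ((rdEquiv D).functor ⋙ L.op ⋙ (rdEquiv C).inverse) :=
      ((rdEquiv C).toAdjunction.comp (adjL.op)).comp
        (rdEquiv D).symm.toAdjunction
    have a3 : F ⊣ ((rdEquiv D).functor ⋙ L.op ⋙ (rdEquiv C).inverse) :=
      a2.ofNatIsoLeft (psiR F)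
    exact a1.ofNatIsoLeft (Adjunction.rightAdjointUniq adjR a3).symm
end

section
/- Let F : C → D be a strong monoidal functor between rigid monoidal categories with left adjoint L and right adjoint R, and suppose there exists an object χ in D with a natural isomorphism R(V) ≅ L(V ⊗ χ) for all V in D. Then the functor V ↦ F(V) ⊗ χ^* is right adjoint to R. -/
open CategoryTheory MonoidalCategory

universe v₁ v₂ u₁ u₂

variable {C : Type u₁} [Category.{v₁} C] [MonoidalCategory C] [RigidCategory C]
variable {D : Type u₂} [Category.{v₂} D] [MonoidalCategory D] [RigidCategory D]

/-- If `L ⊣ F ⊣ R` and `R(V) ≅ L(V ⊗ χ)` naturally, then `V ↦ F(V) ⊗ χ^*` is right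
adjoint to `R`. -/
theorem stmt_3 (F : C ⥤ D) [F.Monoidal] (L R : D ⥤ C)
    (adjL : L ⊣ F) (adjR : F ⊣ R) (χ : D)
    (e : R ≅ tensorRight χ ⋙ L) :
    Nonempty (R ⊣ F ⋙ tensorRight (χᘁ)) :=
  ⟨(((tensorRightAdjunction χ (χᘁ)).comp adjL).ofNatIsoLeft e.symm)⟩
end

section
/- A tensor functor F between rigid monoidal categories that satisfies R ≅ L(- ⊗ χ_F) (for L ⊣ F ⊣ R) is a Frobenius functor (i.e., L ≅ R) if and only if the relative modular object χ_F is isomorphic to the unit object. -/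
open CategoryTheory MonoidalCategory

universe v₁ v₂ u₁ u₂

variable {C : Type u₁} [Category.{v₁} C] [MonoidalCategory C] [RigidCategory C]
variable {D : Type u₂} [Category.{v₂} D] [MonoidalCategory D] [RigidCategory D]

/-- `F` is a Frobenius functor (`L ≅ R`) iff the relative modular object `χ_F` is
isomorphic to the unit object. -/
theorem stmt_8 (F : C ⥤ D) [F.Monoidal] (L R : D ⥤ C) (G : C ⥤ D)
    (adjL : L ⊣ F) (adjR : F ⊣ R) (adjG : R ⊣ G) (χ : D)
    (e : R ≅ tensorRight χ ⋙ L) :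
    Nonempty (L ≅ R) ↔ Nonempty (χ ≅ 𝟙_ D) := by
  constructor
  · rintro ⟨h⟩
    have adj2 : L ⊣ F ⋙ tensorRight (χᘁ) :=
      ((tensorRightAdjunction χ (χᘁ)).comp adjL).ofNatIsoLeft (h ≪≫ e).symm
    have i : F ≅ F ⋙ tensorRight (χᘁ) := adjL.rightAdjointUniq adj2
    have j : (χᘁ) ≅ 𝟙_ D :=
      (λ_ _).symm ≪≫ whiskerRightIso (Functor.Monoidal.εIso F) (χᘁ) ≪≫
        (i.app (𝟙_ C)).symm ≪≫ (Functor.Monoidal.εIso F).symm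
    have p : ExactPairing χ (𝟙_ D) := exactPairingCongrRight (X := χ) j.symm
    exact ⟨leftDualIso p exactPairingUnit⟩
  · rintro ⟨j⟩
    have k : tensorRight χ ⋙ L ≅ L := by
      refine NatIso.ofComponents
        (fun d => L.mapIso (whiskerLeftIso d j ≪≫ ρ_ d)) (fun f => ?_)
      simp only [Functor.flip_obj_map, curriedTensor_map_app, Functor.comp_map, Functor.mapIso_hom,
        Iso.trans_hom, whiskerLeftIso_hom, ← L.map_comp]
      refine congrArg L.map ?_
      rw [← Category.assoc, ← whisker_exchange, Category.assoc,
        rightUnitor_naturality, Category.assoc]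
    exact ⟨(e ≪≫ k).symm⟩
end

section
/- Let C be a rigid monoidal category, let M and N be left C-module categories, and let F : M → N be a lax C-module functor (i.e., equipped with a natural transformation ξ_{X,M} : X ▷ F(M) → F(X ▷ M) compatible with the associativity and unit constraints). Then ξ is invertible, i.e., F is a strong C-module functor. -/
open CategoryTheory MonoidalCategory CategoryTheory.Functor

attribute [local instance] CategoryTheory.endofunctorMonoidalCategory

universe v₁ v₂ v₃ u₁ u₂ u₃

variable {C : Type u₁} [Category.{v₁} C] [MonoidalCategory C]
variable {M : Type u₂} [Category.{v₂} M] {N : Type u₃} [Category.{v₃} N]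

/-- A left `C`-module category structure on `M` is encoded as a strong monoidal functor
`ρ : C ⥤ (M ⥤ M)` to the endofunctor category; the action is `X ▷ m := (ρ.obj X).obj m`.
A lax `C`-module functor structure on `F : M ⥤ N` (with respect to module structures `ρ` on
`M` and `τ` on `N`) is a natural family `ξ X : X ▷ F(-) ⟶ F(X ▷ -)` compatible with the
associativity and unit constraints. -/
structure LaxModuleFunctorStruct (ρ : C ⥤ M ⥤ M) [ρ.Monoidal]
    (τ : C ⥤ N ⥤ N) [τ.Monoidal] (F : M ⥤ N) where
  ξ : ∀ X : C, F ⋙ τ.obj X ⟶ ρ.obj X ⋙ F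
  natural : ∀ {X Y : C} (f : X ⟶ Y) (m : M),
    (τ.map f).app (F.obj m) ≫ (ξ Y).app m = (ξ X).app m ≫ F.map ((ρ.map f).app m)
  unit : ∀ m : M,
    (LaxMonoidal.ε τ).app (F.obj m) ≫ (ξ (𝟙_ C)).app m = F.map ((LaxMonoidal.ε ρ).app m)
  assoc : ∀ (X Y : C) (m : M),
    (LaxMonoidal.μ τ X Y).app (F.obj m) ≫ (ξ (X ⊗ Y)).app m =
      (τ.obj Y).map ((ξ X).app m) ≫ (ξ Y).app ((ρ.obj X).obj m) ≫
        F.map ((LaxMonoidal.μ ρ X Y).app m)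

/-- A colax `C`-module functor structure on `F : M ⥤ N`: a natural family
`ζ X : F(X ▷ -) ⟶ X ▷ F(-)` compatible with the associativity and unit constraints. -/
structure ColaxModuleFunctorStruct (ρ : C ⥤ M ⥤ M) [ρ.Monoidal]
    (τ : C ⥤ N ⥤ N) [τ.Monoidal] (F : M ⥤ N) where
  ζ : ∀ X : C, ρ.obj X ⋙ F ⟶ F ⋙ τ.obj X
  natural : ∀ {X Y : C} (f : X ⟶ Y) (m : M),
    F.map ((ρ.map f).app m) ≫ (ζ Y).app m = (ζ X).app m ≫ (τ.map f).app (F.obj m)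
  unit : ∀ m : M,
    F.map ((LaxMonoidal.ε ρ).app m) ≫ (ζ (𝟙_ C)).app m = (LaxMonoidal.ε τ).app (F.obj m)
  assoc : ∀ (X Y : C) (m : M),
    F.map ((LaxMonoidal.μ ρ X Y).app m) ≫ (ζ (X ⊗ Y)).app m =
      (ζ Y).app ((ρ.obj X).obj m) ≫ (τ.obj Y).map ((ζ X).app m) ≫
        (LaxMonoidal.μ τ X Y).app (F.obj m)

lemma key {D : Type u₂} [Category.{v₂} D] [MonoidalCategory D]
    (G : C ⥤ D) [G.Monoidal] (X : C) [HasLeftDual X] :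
    G.obj X ◁ (LaxMonoidal.ε G ≫ G.map (η_ (ᘁX) X) ≫ OplaxMonoidal.δ G (ᘁX) X) ≫
      (α_ (G.obj X) (G.obj (ᘁX)) (G.obj X)).inv ≫
      (LaxMonoidal.μ G X (ᘁX) ≫ G.map (ε_ (ᘁX) X) ≫ OplaxMonoidal.η G) ▷ G.obj X =
      (ρ_ (G.obj X)).hom ≫ (λ_ (G.obj X)).inv := by
  have hmid : G.obj X ◁ OplaxMonoidal.δ G (ᘁX) X ≫
      (α_ (G.obj X) (G.obj (ᘁX)) (G.obj X)).inv ≫ LaxMonoidal.μ G X (ᘁX) ▷ G.obj X =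
      LaxMonoidal.μ G X ((ᘁX) ⊗ X) ≫ G.map (α_ X (ᘁX) X).inv ≫
        OplaxMonoidal.δ G (X ⊗ ᘁX) X := by
    rw [← cancel_mono (LaxMonoidal.μ G (X ⊗ ᘁX) X)]
    simp only [Category.assoc, Monoidal.δ_μ, Category.comp_id]
    rw [← LaxMonoidal.associativity_inv G X (ᘁX) X, Monoidal.whiskerLeft_δ_μ_assoc]
  calc G.obj X ◁ (LaxMonoidal.ε G ≫ G.map (η_ (ᘁX) X) ≫ OplaxMonoidal.δ G (ᘁX) X) ≫
      (α_ (G.obj X) (G.obj (ᘁX)) (G.obj X)).inv ≫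
      (LaxMonoidal.μ G X (ᘁX) ≫ G.map (ε_ (ᘁX) X) ≫ OplaxMonoidal.η G) ▷ G.obj X
    _ = G.obj X ◁ LaxMonoidal.ε G ≫ G.obj X ◁ G.map (η_ (ᘁX) X) ≫
        (G.obj X ◁ OplaxMonoidal.δ G (ᘁX) X ≫
          (α_ (G.obj X) (G.obj (ᘁX)) (G.obj X)).inv ≫ LaxMonoidal.μ G X (ᘁX) ▷ G.obj X) ≫
        G.map (ε_ (ᘁX) X) ▷ G.obj X ≫ OplaxMonoidal.η G ▷ G.obj X := by
        simp only [MonoidalCategory.whiskerLeft_comp, MonoidalCategory.comp_whiskerRight,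
          Category.assoc]
    _ = G.obj X ◁ LaxMonoidal.ε G ≫ (G.obj X ◁ G.map (η_ (ᘁX) X) ≫
        LaxMonoidal.μ G X ((ᘁX) ⊗ X)) ≫ G.map (α_ X (ᘁX) X).inv ≫
        (OplaxMonoidal.δ G (X ⊗ ᘁX) X ≫ G.map (ε_ (ᘁX) X) ▷ G.obj X) ≫
        OplaxMonoidal.η G ▷ G.obj X := by rw [hmid]; simp only [Category.assoc]
    _ = G.obj X ◁ LaxMonoidal.ε G ≫ LaxMonoidal.μ G X (𝟙_ C) ≫
        G.map (X ◁ η_ (ᘁX) X ≫ (α_ X (ᘁX) X).inv ≫ ε_ (ᘁX) X ▷ X) ≫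
        OplaxMonoidal.δ G (𝟙_ C) X ≫ OplaxMonoidal.η G ▷ G.obj X := by
        rw [LaxMonoidal.μ_natural_right, OplaxMonoidal.δ_natural_left]
        simp only [Category.assoc, Functor.map_comp]
    _ = (G.obj X ◁ LaxMonoidal.ε G ≫ LaxMonoidal.μ G X (𝟙_ C) ≫ G.map (ρ_ X).hom) ≫
        (G.map (λ_ X).inv ≫ OplaxMonoidal.δ G (𝟙_ C) X ≫ OplaxMonoidal.η G ▷ G.obj X) := by
        rw [ExactPairing.coevaluation_evaluation]
        simp only [Category.assoc, Functor.map_comp]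
    _ = (ρ_ (G.obj X)).hom ≫ (λ_ (G.obj X)).inv := by
        rw [← LaxMonoidal.right_unitality, ← OplaxMonoidal.left_unitality]

lemma keyApp {D : Type u₂} [Category.{v₂} D]
    (G : C ⥤ D ⥤ D) [G.Monoidal] (X : C) [HasLeftDual X] (d : D) :
    (LaxMonoidal.ε G).app ((G.obj X).obj d) ≫
      (G.map (η_ (ᘁX) X)).app ((G.obj X).obj d) ≫
      (OplaxMonoidal.δ G (ᘁX) X).app ((G.obj X).obj d) ≫
      (G.obj X).map ((LaxMonoidal.μ G X (ᘁX)).app d ≫ (G.map (ε_ (ᘁX) X)).app d ≫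
        (OplaxMonoidal.η G).app d) = 𝟙 _ := by
  have h := NatTrans.congr_app (key G X) d
  simpa using h

/-- If `C` is rigid, every lax `C`-module functor is strong: each component of the lax
structure is invertible. -/
theorem stmt_9 [RigidCategory C] (ρ : C ⥤ M ⥤ M) [ρ.Monoidal]
    (τ : C ⥤ N ⥤ N) [τ.Monoidal] (F : M ⥤ N)
    (S : LaxModuleFunctorStruct ρ τ F) :
    ∀ (X : C) (m : M), IsIso ((S.ξ X).app m) := by
  intro X m
  -- component-level facts about the (op)lax structures
  have hμδρ : ∀ (k : M), (LaxMonoidal.μ ρ X (ᘁX)).app k ≫ (OplaxMonoidal.δ ρ X (ᘁX)).app k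
      = 𝟙 _ := fun k => by simpa using NatTrans.congr_app (Monoidal.μ_δ (F := ρ) X (ᘁX)) k
  have hμδρ' : ∀ (k : M), (LaxMonoidal.μ ρ (ᘁX) X).app k ≫ (OplaxMonoidal.δ ρ (ᘁX) X).app k
      = 𝟙 _ := fun k => by simpa using NatTrans.congr_app (Monoidal.μ_δ (F := ρ) (ᘁX) X) k
  have hδμτ : ∀ (n : N), (OplaxMonoidal.δ τ (ᘁX) X).app n ≫ (LaxMonoidal.μ τ (ᘁX) X).app n
      = 𝟙 _ := fun n => by simpa using NatTrans.congr_app (Monoidal.δ_μ (F := τ) (ᘁX) X) n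
  have hεηρ : ∀ (k : M), (LaxMonoidal.ε ρ).app k ≫ (OplaxMonoidal.η ρ).app k = 𝟙 _ :=
    fun k => by simpa using NatTrans.congr_app (Monoidal.ε_η (F := ρ)) k
  have hηετ : ∀ (n : N), (OplaxMonoidal.η τ).app n ≫ (LaxMonoidal.ε τ).app n = 𝟙 _ :=
    fun n => by simpa using NatTrans.congr_app (Monoidal.η_ε (F := τ)) n
  -- the candidate inverse
  refine ⟨(LaxMonoidal.ε τ).app (F.obj ((ρ.obj X).obj m)) ≫
      (τ.map (η_ (ᘁX) X)).app (F.obj ((ρ.obj X).obj m)) ≫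
      (OplaxMonoidal.δ τ (ᘁX) X).app (F.obj ((ρ.obj X).obj m)) ≫
      (τ.obj X).map ((S.ξ (ᘁX)).app ((ρ.obj X).obj m)) ≫
      (τ.obj X).map (F.map ((LaxMonoidal.μ ρ X (ᘁX)).app m)) ≫
      (τ.obj X).map (F.map ((ρ.map (ε_ (ᘁX) X)).app m)) ≫
      (τ.obj X).map (F.map ((OplaxMonoidal.η ρ).app m)), ?_, ?_⟩
  · -- ξ ≫ ζ = 𝟙
    have s1 : (S.ξ X).app m ≫ (LaxMonoidal.ε τ).app (F.obj ((ρ.obj X).obj m)) =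
        (LaxMonoidal.ε τ).app ((τ.obj X).obj (F.obj m)) ≫
          (τ.obj (𝟙_ C)).map ((S.ξ X).app m) := by
      simpa using (LaxMonoidal.ε τ).naturality ((S.ξ X).app m)
    have s2 : (τ.obj (𝟙_ C)).map ((S.ξ X).app m) ≫
        (τ.map (η_ (ᘁX) X)).app (F.obj ((ρ.obj X).obj m)) =
        (τ.map (η_ (ᘁX) X)).app ((τ.obj X).obj (F.obj m)) ≫
          (τ.obj ((ᘁX) ⊗ X)).map ((S.ξ X).app m) := by
      simpa using (τ.map (η_ (ᘁX) X)).naturality ((S.ξ X).app m)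
    have s3 : (τ.obj ((ᘁX) ⊗ X)).map ((S.ξ X).app m) ≫
        (OplaxMonoidal.δ τ (ᘁX) X).app (F.obj ((ρ.obj X).obj m)) =
        (OplaxMonoidal.δ τ (ᘁX) X).app ((τ.obj X).obj (F.obj m)) ≫
          (τ.obj X).map ((τ.obj (ᘁX)).map ((S.ξ X).app m)) := by
      simpa using (OplaxMonoidal.δ τ (ᘁX) X).naturality ((S.ξ X).app m)
    have s4 : (τ.obj (ᘁX)).map ((S.ξ X).app m) ≫ (S.ξ (ᘁX)).app ((ρ.obj X).obj m) ≫
        F.map ((LaxMonoidal.μ ρ X (ᘁX)).app m) =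
        (LaxMonoidal.μ τ X (ᘁX)).app (F.obj m) ≫ (S.ξ (X ⊗ ᘁX)).app m := by
      rw [S.assoc X (ᘁX) m]
    have s5 : (S.ξ (X ⊗ ᘁX)).app m ≫ F.map ((ρ.map (ε_ (ᘁX) X)).app m) =
        (τ.map (ε_ (ᘁX) X)).app (F.obj m) ≫ (S.ξ (𝟙_ C)).app m :=
      (S.natural (ε_ (ᘁX) X) m).symm
    have s6 : (S.ξ (𝟙_ C)).app m ≫ F.map ((OplaxMonoidal.η ρ).app m) =
        (OplaxMonoidal.η τ).app (F.obj m) := by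
      have h := S.unit m
      calc (S.ξ (𝟙_ C)).app m ≫ F.map ((OplaxMonoidal.η ρ).app m)
          = ((OplaxMonoidal.η τ).app (F.obj m) ≫ (LaxMonoidal.ε τ).app (F.obj m)) ≫
            (S.ξ (𝟙_ C)).app m ≫ F.map ((OplaxMonoidal.η ρ).app m) := by
            rw [hηετ]; simp
        _ = (OplaxMonoidal.η τ).app (F.obj m) ≫ F.map ((LaxMonoidal.ε ρ).app m) ≫
            F.map ((OplaxMonoidal.η ρ).app m) := by
            rw [Category.assoc, ← Category.assoc ((LaxMonoidal.ε τ).app (F.obj m)), h]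
        _ = (OplaxMonoidal.η τ).app (F.obj m) := by
            rw [← F.map_comp, hεηρ]; simp
    calc (S.ξ X).app m ≫ (LaxMonoidal.ε τ).app (F.obj ((ρ.obj X).obj m)) ≫
        (τ.map (η_ (ᘁX) X)).app (F.obj ((ρ.obj X).obj m)) ≫
        (OplaxMonoidal.δ τ (ᘁX) X).app (F.obj ((ρ.obj X).obj m)) ≫
        (τ.obj X).map ((S.ξ (ᘁX)).app ((ρ.obj X).obj m)) ≫
        (τ.obj X).map (F.map ((LaxMonoidal.μ ρ X (ᘁX)).app m)) ≫
        (τ.obj X).map (F.map ((ρ.map (ε_ (ᘁX) X)).app m)) ≫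
        (τ.obj X).map (F.map ((OplaxMonoidal.η ρ).app m))
      _ = (LaxMonoidal.ε τ).app ((τ.obj X).obj (F.obj m)) ≫
          (τ.map (η_ (ᘁX) X)).app ((τ.obj X).obj (F.obj m)) ≫
          (OplaxMonoidal.δ τ (ᘁX) X).app ((τ.obj X).obj (F.obj m)) ≫
          (τ.obj X).map ((τ.obj (ᘁX)).map ((S.ξ X).app m) ≫
            (S.ξ (ᘁX)).app ((ρ.obj X).obj m) ≫
            F.map ((LaxMonoidal.μ ρ X (ᘁX)).app m) ≫
            F.map ((ρ.map (ε_ (ᘁX) X)).app m) ≫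
            F.map ((OplaxMonoidal.η ρ).app m)) := by
          rw [← Category.assoc, s1, Category.assoc, ← Category.assoc
            ((τ.obj (𝟙_ C)).map ((S.ξ X).app m)), s2, Category.assoc,
            ← Category.assoc ((τ.obj ((ᘁX) ⊗ X)).map ((S.ξ X).app m)), s3]
          simp only [Category.assoc, Functor.map_comp]
      _ = (LaxMonoidal.ε τ).app ((τ.obj X).obj (F.obj m)) ≫
          (τ.map (η_ (ᘁX) X)).app ((τ.obj X).obj (F.obj m)) ≫
          (OplaxMonoidal.δ τ (ᘁX) X).app ((τ.obj X).obj (F.obj m)) ≫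
          (τ.obj X).map ((LaxMonoidal.μ τ X (ᘁX)).app (F.obj m) ≫
            (τ.map (ε_ (ᘁX) X)).app (F.obj m) ≫
            (OplaxMonoidal.η τ).app (F.obj m)) := by
          have harg : (τ.obj (ᘁX)).map ((S.ξ X).app m) ≫
              (S.ξ (ᘁX)).app ((ρ.obj X).obj m) ≫
              F.map ((LaxMonoidal.μ ρ X (ᘁX)).app m) ≫
              F.map ((ρ.map (ε_ (ᘁX) X)).app m) ≫
              F.map ((OplaxMonoidal.η ρ).app m) =
              (LaxMonoidal.μ τ X (ᘁX)).app (F.obj m) ≫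
              (τ.map (ε_ (ᘁX) X)).app (F.obj m) ≫
              (OplaxMonoidal.η τ).app (F.obj m) := by
            calc (τ.obj (ᘁX)).map ((S.ξ X).app m) ≫
                (S.ξ (ᘁX)).app ((ρ.obj X).obj m) ≫
                F.map ((LaxMonoidal.μ ρ X (ᘁX)).app m) ≫
                F.map ((ρ.map (ε_ (ᘁX) X)).app m) ≫
                F.map ((OplaxMonoidal.η ρ).app m)
              _ = ((τ.obj (ᘁX)).map ((S.ξ X).app m) ≫
                  (S.ξ (ᘁX)).app ((ρ.obj X).obj m) ≫
                  F.map ((LaxMonoidal.μ ρ X (ᘁX)).app m)) ≫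
                  F.map ((ρ.map (ε_ (ᘁX) X)).app m) ≫
                  F.map ((OplaxMonoidal.η ρ).app m) := by simp only [Category.assoc]
              _ = (LaxMonoidal.μ τ X (ᘁX)).app (F.obj m) ≫
                  ((S.ξ (X ⊗ ᘁX)).app m ≫ F.map ((ρ.map (ε_ (ᘁX) X)).app m)) ≫
                  F.map ((OplaxMonoidal.η ρ).app m) := by
                  rw [s4]; simp only [Category.assoc]
              _ = (LaxMonoidal.μ τ X (ᘁX)).app (F.obj m) ≫
                  (τ.map (ε_ (ᘁX) X)).app (F.obj m) ≫ (S.ξ (𝟙_ C)).app m ≫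
                  F.map ((OplaxMonoidal.η ρ).app m) := by
                  rw [s5]; simp only [Category.assoc]
              _ = _ := by rw [s6]
          rw [harg]
      _ = 𝟙 _ := keyApp τ X (F.obj m)
  · -- ζ ≫ ξ = 𝟙
    have hnat : ∀ {k k' : M} (f : k ⟶ k'),
        (τ.obj X).map (F.map f) ≫ (S.ξ X).app k' =
          (S.ξ X).app k ≫ F.map ((ρ.obj X).map f) := fun f => (S.ξ X).naturality f
    have s4 : (τ.obj X).map ((S.ξ (ᘁX)).app ((ρ.obj X).obj m)) ≫
        (S.ξ X).app ((ρ.obj (ᘁX)).obj ((ρ.obj X).obj m)) =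
        (LaxMonoidal.μ τ (ᘁX) X).app (F.obj ((ρ.obj X).obj m)) ≫
          (S.ξ ((ᘁX) ⊗ X)).app ((ρ.obj X).obj m) ≫
          F.map ((OplaxMonoidal.δ ρ (ᘁX) X).app ((ρ.obj X).obj m)) := by
      have h := S.assoc (ᘁX) X ((ρ.obj X).obj m)
      calc (τ.obj X).map ((S.ξ (ᘁX)).app ((ρ.obj X).obj m)) ≫
          (S.ξ X).app ((ρ.obj (ᘁX)).obj ((ρ.obj X).obj m))
        _ = ((τ.obj X).map ((S.ξ (ᘁX)).app ((ρ.obj X).obj m)) ≫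
            (S.ξ X).app ((ρ.obj (ᘁX)).obj ((ρ.obj X).obj m)) ≫
            F.map ((LaxMonoidal.μ ρ (ᘁX) X).app ((ρ.obj X).obj m))) ≫
            F.map ((OplaxMonoidal.δ ρ (ᘁX) X).app ((ρ.obj X).obj m)) := by
          simp only [Category.assoc, ← F.map_comp, hμδρ']
          simp
        _ = _ := by rw [← h]; simp only [Category.assoc]
    calc ((LaxMonoidal.ε τ).app (F.obj ((ρ.obj X).obj m)) ≫
        (τ.map (η_ (ᘁX) X)).app (F.obj ((ρ.obj X).obj m)) ≫
        (OplaxMonoidal.δ τ (ᘁX) X).app (F.obj ((ρ.obj X).obj m)) ≫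
        (τ.obj X).map ((S.ξ (ᘁX)).app ((ρ.obj X).obj m)) ≫
        (τ.obj X).map (F.map ((LaxMonoidal.μ ρ X (ᘁX)).app m)) ≫
        (τ.obj X).map (F.map ((ρ.map (ε_ (ᘁX) X)).app m)) ≫
        (τ.obj X).map (F.map ((OplaxMonoidal.η ρ).app m))) ≫ (S.ξ X).app m
      _ = (LaxMonoidal.ε τ).app (F.obj ((ρ.obj X).obj m)) ≫
          (τ.map (η_ (ᘁX) X)).app (F.obj ((ρ.obj X).obj m)) ≫
          (OplaxMonoidal.δ τ (ᘁX) X).app (F.obj ((ρ.obj X).obj m)) ≫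
          (τ.obj X).map ((S.ξ (ᘁX)).app ((ρ.obj X).obj m)) ≫
          (S.ξ X).app ((ρ.obj (ᘁX)).obj ((ρ.obj X).obj m)) ≫
          F.map ((ρ.obj X).map ((LaxMonoidal.μ ρ X (ᘁX)).app m)) ≫
          F.map ((ρ.obj X).map ((ρ.map (ε_ (ᘁX) X)).app m)) ≫
          F.map ((ρ.obj X).map ((OplaxMonoidal.η ρ).app m)) := by
          have t1 := hnat ((LaxMonoidal.μ ρ X (ᘁX)).app m)
          have t2 := hnat ((ρ.map (ε_ (ᘁX) X)).app m)
          have t3 : (τ.obj X).map (F.map ((OplaxMonoidal.η ρ).app m)) ≫ (S.ξ X).app m =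
              (S.ξ X).app ((ρ.obj (𝟙_ C)).obj m) ≫
                F.map ((ρ.obj X).map ((OplaxMonoidal.η ρ).app m)) :=
            (S.ξ X).naturality ((OplaxMonoidal.η ρ).app m)
          simp only [Category.assoc]
          rw [t3, reassoc_of% t2, reassoc_of% t1]
          simp only [endofunctorMonoidalCategory_tensorObj_obj]
      _ = (LaxMonoidal.ε τ).app (F.obj ((ρ.obj X).obj m)) ≫
          (τ.map (η_ (ᘁX) X)).app (F.obj ((ρ.obj X).obj m)) ≫
          ((OplaxMonoidal.δ τ (ᘁX) X).app (F.obj ((ρ.obj X).obj m)) ≫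
          (LaxMonoidal.μ τ (ᘁX) X).app (F.obj ((ρ.obj X).obj m))) ≫
          (S.ξ ((ᘁX) ⊗ X)).app ((ρ.obj X).obj m) ≫
          F.map ((OplaxMonoidal.δ ρ (ᘁX) X).app ((ρ.obj X).obj m)) ≫
          F.map ((ρ.obj X).map ((LaxMonoidal.μ ρ X (ᘁX)).app m)) ≫
          F.map ((ρ.obj X).map ((ρ.map (ε_ (ᘁX) X)).app m)) ≫
          F.map ((ρ.obj X).map ((OplaxMonoidal.η ρ).app m)) := by
          rw [← Category.assoc ((τ.obj X).map ((S.ξ (ᘁX)).app ((ρ.obj X).obj m))), s4]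
          simp only [Category.assoc]
      _ = F.map ((LaxMonoidal.ε ρ).app ((ρ.obj X).obj m)) ≫
          F.map ((ρ.map (η_ (ᘁX) X)).app ((ρ.obj X).obj m)) ≫
          F.map ((OplaxMonoidal.δ ρ (ᘁX) X).app ((ρ.obj X).obj m)) ≫
          F.map ((ρ.obj X).map ((LaxMonoidal.μ ρ X (ᘁX)).app m)) ≫
          F.map ((ρ.obj X).map ((ρ.map (ε_ (ᘁX) X)).app m)) ≫
          F.map ((ρ.obj X).map ((OplaxMonoidal.η ρ).app m)) := by
          rw [hδμτ, Category.id_comp,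
            reassoc_of% (S.natural (η_ (ᘁX) X) ((ρ.obj X).obj m)),
            reassoc_of% (S.unit ((ρ.obj X).obj m))]
      _ = 𝟙 _ := by
          simp only [← Functor.map_comp, Category.assoc]
          rw [keyApp ρ X m]
          simp
end

section
/- Let C be a monoidal category, M a closed left C-module category with internal Hom functor iHom, and let M ∈ M. Suppose every object M' of M is a quotient of an object of the form X ▷ M for some X ∈ C. Then the functor iHom(M, -) : M → C is faithful. -/
open CategoryTheory MonoidalCategory CategoryTheory.Functor CategoryTheory.Limits

attribute [local instance] CategoryTheory.endofunctorMonoidalCategory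

universe v₁ v₂ u₁ u₂

variable {C : Type u₁} [Category.{v₁} C] [MonoidalCategory C]
variable {M : Type u₂} [Category.{v₂} M]

/-- Given a left `C`-module category structure `ρ : C ⥤ (M ⥤ M)` (a monoidal functor into
the endofunctor category, with action `X ▷ m := (ρ.obj X).obj m`) and an object `m₀ : M`,
the functor `C ⥤ M`, `X ↦ X ▷ m₀`. -/
def actFun (ρ : C ⥤ M ⥤ M) (m₀ : M) : C ⥤ M where
  obj X := (ρ.obj X).obj m₀
  map f := (ρ.map f).app m₀
  map_id X := by simp
  map_comp f g := by simp

/-- Let `M` be a closed left `C`-module category with internal Hom `iHom(m₀, -)` right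
adjoint to `(-) ▷ m₀`. If every object of `M` is a quotient of an object of the form
`X ▷ m₀`, then `iHom(m₀, -) : M ⥤ C` is faithful. -/
theorem stmt_13 (ρ : C ⥤ M ⥤ M) [ρ.Monoidal] (m₀ : M)
    (ihom : M ⥤ C) (adj : actFun ρ m₀ ⊣ ihom)
    (h : ∀ m' : M, ∃ (X : C) (p : (ρ.obj X).obj m₀ ⟶ m'), Epi p) :
    ihom.Faithful := by
  constructor
  intro m m' f g hfg
  obtain ⟨X, p, hp⟩ := h m
  have key : ∀ u : m ⟶ m', p ≫ u = (adj.homEquiv X m').symm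
      (adj.homEquiv X m p ≫ ihom.map u) := by
    intro u
    exact (Equiv.eq_symm_apply _).mpr (adj.homEquiv_naturality_right p u)
  have : p ≫ f = p ≫ g := by rw [key f, key g, hfg]
  exact (cancel_epi p).mp this
end

section
/- Let C be a finite tensor category and M a finite left C-module category. Every projective object Q of M is C-projective, i.e., the internal Hom functor iHom(Q, -) : M → C is exact. -/
open CategoryTheory MonoidalCategory CategoryTheory.Functor CategoryTheory.Limits

attribute [local instance] CategoryTheory.endofunctorMonoidalCategory

universe v₁ v₂ u₁ u₂

variable {C : Type u₁} [Category.{v₁} C] [MonoidalCategory C]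
variable {M : Type u₂} [Category.{v₂} M]

section Aux

open CategoryTheory.Functor.LaxMonoidal CategoryTheory.Functor.OplaxMonoidal

/-- A (strong) monoidal functor sends an exact pairing to an exact pairing. -/
def monoidalExactPairing {D : Type*} [Category D] [MonoidalCategory D]
    (F : C ⥤ D) [F.Monoidal] (X Y : C) [ExactPairing X Y] :
    ExactPairing (F.obj X) (F.obj Y) where
  coevaluation' := ε F ≫ F.map (η_ X Y) ≫ δ F X Y
  evaluation' := μ F Y X ≫ F.map (ε_ X Y) ≫ η F
  coevaluation_evaluation' := by
    simp only [MonoidalCategory.whiskerLeft_comp, comp_whiskerRight, Category.assoc]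
    rw [show F.obj Y ◁ F.map (η_ X Y) =
        F.obj Y ◁ F.map (η_ X Y) ≫ μ F Y (X ⊗ Y) ≫ δ F Y (X ⊗ Y) by simp]
    rw [μ_natural_right_assoc]
    simp only [Category.assoc]
    rw [OplaxMonoidal.associativity_inv_assoc]
    rw [show δ F Y X ▷ F.obj Y ≫ μ F Y X ▷ F.obj Y ≫ F.map (ε_ X Y) ▷ F.obj Y ≫ η F ▷ F.obj Y =
        F.map (ε_ X Y) ▷ F.obj Y ≫ η F ▷ F.obj Y by
      rw [← Category.assoc, ← comp_whiskerRight, Functor.Monoidal.δ_μ]; simp]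
    rw [δ_natural_left_assoc, ← F.map_comp_assoc, ← F.map_comp_assoc]
    simp only [Category.assoc]
    rw [ExactPairing.coevaluation_evaluation]
    simp [LaxMonoidal.right_unitality]
  evaluation_coevaluation' := by
    simp only [MonoidalCategory.whiskerLeft_comp, comp_whiskerRight, Category.assoc]
    rw [show F.map (η_ X Y) ▷ F.obj X =
        F.map (η_ X Y) ▷ F.obj X ≫ μ F (X ⊗ Y) X ≫ δ F (X ⊗ Y) X by simp]
    rw [μ_natural_left_assoc]
    simp only [Category.assoc]
    rw [OplaxMonoidal.associativity_assoc]
    rw [show F.obj X ◁ δ F Y X ≫ F.obj X ◁ μ F Y X ≫ F.obj X ◁ F.map (ε_ X Y) ≫ F.obj X ◁ η F =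
        F.obj X ◁ F.map (ε_ X Y) ≫ F.obj X ◁ η F by
      rw [← Category.assoc, ← MonoidalCategory.whiskerLeft_comp, Functor.Monoidal.δ_μ]; simp]
    rw [δ_natural_right_assoc, ← F.map_comp_assoc, ← F.map_comp_assoc]
    simp only [Category.assoc]
    rw [ExactPairing.evaluation_coevaluation]
    simp [LaxMonoidal.left_unitality]

/-- An exact pairing of endofunctors (for the composition monoidal structure) is the same
thing as an adjunction. -/
def adjOfExactPairingEnd (F G : M ⥤ M) [ExactPairing F G] : F ⊣ G :=
  Adjunction.mkOfUnitCounit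
    { unit := η_ F G
      counit := ε_ F G
      left_triangle := by
        ext m
        have := NatTrans.congr_app (ExactPairing.evaluation_coevaluation' (X := F) (Y := G)) m
        simp only [NatTrans.comp_app, endofunctorMonoidalCategory_whiskerRight_app,
          endofunctorMonoidalCategory_whiskerLeft_app,
          endofunctorMonoidalCategory_associator_hom_app,
          endofunctorMonoidalCategory_leftUnitor_hom_app,
          endofunctorMonoidalCategory_rightUnitor_inv_app,
          Category.id_comp, Category.comp_id] at this
        simpa [ExactPairing.coevaluation, ExactPairing.evaluation] using this
      right_triangle := by
        ext m
        have := NatTrans.congr_app (ExactPairing.coevaluation_evaluation' (X := F) (Y := G)) m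
        simp only [NatTrans.comp_app, endofunctorMonoidalCategory_whiskerRight_app,
          endofunctorMonoidalCategory_whiskerLeft_app,
          endofunctorMonoidalCategory_associator_inv_app,
          endofunctorMonoidalCategory_leftUnitor_inv_app,
          endofunctorMonoidalCategory_rightUnitor_hom_app,
          Category.id_comp, Category.comp_id] at this
        simpa [ExactPairing.coevaluation, ExactPairing.evaluation] using this }

end Aux

/-- In a finite left `C`-module category `M` over a finite tensor category `C`, every
projective object `Q : M` is `C`-projective: the internal Hom functor `iHom(Q, -)`
(right adjoint to `(-) ▷ Q`) is exact. -/
theorem stmt_15 {k : Type*} [Field k] [Abelian C] [Linear k C] [RigidCategory C]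
    [Abelian M] [Linear k M]
    (ρ : C ⥤ M ⥤ M) [ρ.Monoidal]
    (hact : ∀ X : C, Nonempty (PreservesFiniteColimits (ρ.obj X)))
    (hgen : ∃ P : C, Projective P ∧ IsSeparator P)
    (Q : M) (hQ : Projective Q) (ihom : M ⥤ C) (adj : actFun ρ Q ⊣ ihom) :
    Nonempty (PreservesFiniteLimits ihom) ∧ Nonempty (PreservesFiniteColimits ihom) := by
  have hlim : PreservesLimitsOfSize.{0, 0} ihom := adj.rightAdjoint_preservesLimits
  have hRA : ihom.IsRightAdjoint := ⟨actFun ρ Q, ⟨adj⟩⟩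
  have hzero : ihom.PreservesZeroMorphisms := inferInstance
  have hadd : ihom.Additive := Functor.additive_of_preserves_binary_products ihom
  -- `ihom` preserves epimorphisms
  obtain ⟨P, hP, hsep⟩ := hgen
  -- `P ▷ Q` is projective
  have pairC : ExactPairing P Pᘁ := inferInstance
  have pairEnd : ExactPairing (ρ.obj P) (ρ.obj Pᘁ) := monoidalExactPairing ρ P Pᘁ
  have adj2 : ρ.obj P ⊣ ρ.obj Pᘁ := adjOfExactPairingEnd _ _
  have : PreservesFiniteColimits (ρ.obj Pᘁ) := (hact _).some
  have hPQ : Projective ((ρ.obj P).obj Q) := adj2.map_projective Q hQ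
  haveI hPQ' : Projective ((actFun ρ Q).obj P) := hPQ
  have hepi : ihom.PreservesEpimorphisms := by
    constructor
    intro A B e he
    rw [Preadditive.epi_iff_cancel_zero]
    intro T h hh
    refine (isSeparator_def P).1 hsep _ _ (fun u => ?_)
    have hu : u = adj.homEquiv P B ((adj.homEquiv P B).symm u) := by simp
    set v' : (actFun ρ Q).obj P ⟶ A :=
      Projective.factorThru ((adj.homEquiv P B).symm u) e with hv'
    have hv : v' ≫ e = (adj.homEquiv P B).symm u :=
      Projective.factorThru_comp _ _
    calc u ≫ h = adj.homEquiv P B (v' ≫ e) ≫ h := by rw [hv, ← hu]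
    _ = (adj.homEquiv P A v' ≫ ihom.map e) ≫ h := by rw [adj.homEquiv_naturality_right]
    _ = adj.homEquiv P A v' ≫ (ihom.map e ≫ h) := by simp
    _ = 0 := by rw [hh]; simp
    _ = u ≫ 0 := by simp
  have hker : ∀ {X Y : M} (f : X ⟶ Y), PreservesLimit (parallelPair f 0) ihom :=
    fun f => inferInstance
  have hhom : ihom.PreservesHomology :=
    Functor.preservesHomology_of_preservesEpis_and_kernels ihom
  constructor
  · exact ⟨⟨fun J _ _ => inferInstance⟩⟩
  · exact ⟨ihom.preservesFiniteColimits_of_preservesHomology⟩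
end
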